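/- Let y₁, y₂ > 0 be real numbers satisfying 27·y₁⁴·y₂⁴ − 18·y₁²·y₂² + 4·y₁² + 4·y₂² = 1 and (y₁, y₂) ≠ (1/√3, 1/√3). Then the degree-6 polynomial E (leading coefficient y₁² + y₂² + 2) has exactly four distinct complex roots, all of them real: two roots of multiplicity 2 and two roots of multiplicity 1. -/

import Mathlib

open Polynomial

/-- The polynomial `E` viewed over ℂ (degree 6, leading coefficient `y₁²+y₂²+2`). -/
noncomputable def EPoly (y₁ y₂ : ℝ) : Polynomial ℂ :=
  C ((y₁ : ℂ)^2) * (X^2 + 4*X + 1)^3 + C ((y₂ : ℂ)^2) * (X^2 - 2*X - 2)^3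
    + 2*X^6 + 6*X^5 - 15*X^4 - 40*X^3 - 15*X^2 + 6*X + 2

/-!
With `a = y₁²`, `b = y₂²` the caustic `27a²b² - 18ab + 4a + 4b = 1` is the rational curve
`3a = 1 - s²`, `3(1+s)²b = 1 + 2s`, inverted by `s = (1 - 6b + 9ab)/(6b - 2)`; the cusp
`(1/3, 1/3)` is `s = 0`. Along it `3(1+s)² E = D² M` with `D = foldQuadratic s` and
`M = simpleQuadratic s`, whose discriminants `12(1+s+s²)` and `12(1+s+s²)²` are positive.
A common root of `D` and `M` is a root of `(2+2s-s²) D - (2+s) M = 9s(1+s)(2t+1)`, hence is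
`-1/2` when `s ≠ 0`, but `D(-1/2) = -3(2+s)/4 ≠ 0`.
-/

theorem Polynomial.roots_eq_of_forall_eval_eq {K : Type*} [Field K] [Infinite K] {p : K[X]}
    {c : K} (hc : c ≠ 0) {s : Multiset K}
    (h : ∀ x, p.eval x = c * (s.map fun r => x - r).prod) : p.roots = s := by
  have hp : p = C c * (s.map fun r => X - C r).prod := by
    refine Polynomial.funext fun x => ?_
    simp [h, eval_multiset_prod, Multiset.map_map]
  rw [hp, roots_C_mul _ hc, roots_multiset_prod_X_sub_C]

theorem exists_ne_forall_quadratic_eq {a b c : ℝ} (ha : a ≠ 0) (hd : 0 < discrim a b c) :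
    ∃ r₁ r₂ : ℝ, r₁ ≠ r₂ ∧ ∀ x : ℂ, a * x^2 + b * x + c = a * (x - r₁) * (x - r₂) := by
  obtain ⟨d, hd0, hd2⟩ : ∃ d, 0 < d ∧ d ^ 2 = discrim a b c :=
    ⟨_, Real.sqrt_pos.mpr hd, Real.sq_sqrt hd.le⟩
  refine ⟨(-b + d) / (2 * a), (-b - d) / (2 * a), ?_, fun x => ?_⟩
  · rw [Ne, div_left_inj' (by simpa using ha)]
    linarith
  · have haC : (a : ℂ) ≠ 0 := by exact_mod_cast ha
    have hdC : (d : ℂ) ^ 2 = b ^ 2 - 4 * a * c := by exact_mod_cast hd2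
    push_cast
    field_simp
    linear_combination hdC

theorem exists_param_of_caustic {a b : ℝ}
    (h : 27 * a^2 * b^2 - 18 * a * b + 4 * a + 4 * b = 1) (hne : (a, b) ≠ (1 / 3, 1 / 3)) :
    ∃ s : ℝ, s ≠ 0 ∧ 3 * a = 1 - s^2 ∧ 3 * (1 + s)^2 * b = 1 + 2 * s := by
  have hb3 : 6 * b - 2 ≠ 0 := by
    intro hb3
    have hb' : b = 1 / 3 := by linarith
    have ha' : (3 * a - 1)^2 = 0 := by subst hb'; linear_combination 3 * h
    exact hne (Prod.ext (by linarith [pow_eq_zero_iff two_ne_zero |>.mp ha']) hb')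
  obtain ⟨s, hs⟩ : ∃ s, s * (6 * b - 2) = 1 - 6 * b + 9 * a * b := ⟨_, div_mul_cancel₀ _ hb3⟩
  have h₁ : 3 * a = 1 - s^2 := by
    refine mul_right_cancel₀ (pow_ne_zero 2 hb3) ?_
    linear_combination 3 * h + (s * (6 * b - 2) + 1 - 6 * b + 9 * a * b) * hs
  have h₂ : 3 * (1 + s)^2 * b = 1 + 2 * s := by
    refine mul_right_cancel₀ (pow_ne_zero 2 hb3) ?_
    linear_combination 9 * b * h
      + (3 * b * (2 * (6 * b - 2) + s * (6 * b - 2) + 1 - 6 * b + 9 * a * b) - 2 * (6 * b - 2)) * hs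
  refine ⟨s, fun hs0 => hne (Prod.ext ?_ ?_), h₁, h₂⟩
  · simp only [hs0] at h₁; linarith
  · simp only [hs0] at h₂; linarith

section Factorization

variable {K : Type*} [Field K]

def foldQuadratic (s x : K) : K := (2 + s) * x^2 + (2 + 4 * s) * x - (1 - s)

def simpleQuadratic (s x : K) : K :=
  (2 + 2 * s - s^2) * x^2 + (2 - 4 * s - 4 * s^2) * x - (1 + 4 * s + s^2)

theorem three_mul_sq_mul_eval_EPoly {y₁ y₂ s : ℝ} (h₁ : 3 * y₁^2 = 1 - s^2)
    (h₂ : 3 * (1 + s)^2 * y₂^2 = 1 + 2 * s) (x : ℂ) :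
    3 * (1 + s)^2 * (EPoly y₁ y₂).eval x
      = foldQuadratic (s : ℂ) x ^ 2 * simpleQuadratic (s : ℂ) x := by
  have h₁C : 3 * (y₁ : ℂ)^2 = 1 - s^2 := by exact_mod_cast h₁
  have h₂C : 3 * (1 + s)^2 * (y₂ : ℂ)^2 = 1 + 2 * s := by exact_mod_cast h₂
  simp only [EPoly, foldQuadratic, simpleQuadratic, eval_add, eval_sub, eval_mul, eval_pow,
    eval_C, eval_X, eval_ofNat, eval_one]
  linear_combination (1 + (s : ℂ))^2 * (x^2 + 4 * x + 1)^3 * h₁C + (x^2 - 2 * x - 2)^3 * h₂C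

theorem ne_of_foldQuadratic_of_simpleQuadratic [CharZero K] {s r r' : K} (hs : s ≠ 0)
    (hs₁ : 1 + s ≠ 0) (hs₂ : 2 + s ≠ 0) (hr : foldQuadratic s r = 0)
    (hr' : simpleQuadratic s r' = 0) : r ≠ r' := by
  rintro rfl
  unfold foldQuadratic at hr
  unfold simpleQuadratic at hr'
  have hlin : s * (1 + s) * (2 * r + 1) = 0 := by
    linear_combination ((2 + 2 * s - s^2) * hr - (2 + s) * hr') / 9
  have hhalf : r = -1 / 2 := by
    have : 2 * r + 1 = 0 := by simpa [hs, hs₁] using hlin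
    linear_combination this / 2
  rw [hhalf] at hr
  exact hs₂ (by linear_combination (-4 / 3) * hr)

theorem three_mul_sq_mul_leadingCoeff {y₁ y₂ s : ℝ} (h₁ : 3 * y₁^2 = 1 - s^2)
    (h₂ : 3 * (1 + s)^2 * y₂^2 = 1 + 2 * s) :
    3 * (1 + s)^2 * (y₁^2 + y₂^2 + 2) = (2 + s)^2 * (2 + 2 * s - s^2) := by
  linear_combination (1 + s)^2 * h₁ + h₂

theorem roots_EPoly_eq {y₁ y₂ s r₁ r₂ r₃ r₄ : ℝ} (h₁ : 3 * y₁^2 = 1 - s^2)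
    (h₂ : 3 * (1 + s)^2 * y₂^2 = 1 + 2 * s) (hs : 1 + s ≠ 0)
    (hD : ∀ x : ℂ, foldQuadratic (s : ℂ) x = (2 + s) * (x - r₁) * (x - r₂))
    (hM : ∀ x : ℂ, simpleQuadratic (s : ℂ) x = (2 + 2 * s - s^2) * (x - r₃) * (x - r₄)) :
    (EPoly y₁ y₂).roots = {(r₁ : ℂ), (r₁ : ℂ), (r₂ : ℂ), (r₂ : ℂ), (r₃ : ℂ), (r₄ : ℂ)} := by
  have hL : 3 * (1 + s)^2 * (y₁^2 + y₂^2 + 2 : ℂ) = (2 + s)^2 * (2 + 2 * s - s^2) := by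
    exact_mod_cast three_mul_sq_mul_leadingCoeff h₁ h₂
  have hsC : 3 * (1 + s : ℂ)^2 ≠ 0 := by
    exact_mod_cast mul_ne_zero three_ne_zero (pow_ne_zero 2 hs)
  refine roots_eq_of_forall_eval_eq (c := (y₁ : ℂ)^2 + (y₂ : ℂ)^2 + 2) ?_
    fun x => mul_left_cancel₀ hsC ?_
  · exact_mod_cast (by positivity : y₁^2 + y₂^2 + 2 ≠ 0)
  · simp only [Multiset.insert_eq_cons, Multiset.map_cons, Multiset.map_singleton,
      Multiset.prod_cons, Multiset.prod_singleton]
    rw [three_mul_sq_mul_eval_EPoly h₁ h₂, hD, hM]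
    linear_combination
      (-((x - r₁) * ((x - r₁) * ((x - r₂) * ((x - r₂) * ((x - r₃) * (x - r₄))))))) * hL

end Factorization

theorem exists_roots_EPoly_of_param {y₁ y₂ s : ℝ} (hs : s ≠ 0) (h₁ : 3 * y₁^2 = 1 - s^2)
    (h₂ : 3 * (1 + s)^2 * y₂^2 = 1 + 2 * s) :
    ∃ t₁ t₂ t₃ t₄ : ℝ,
      t₁ ≠ t₂ ∧ t₁ ≠ t₃ ∧ t₁ ≠ t₄ ∧ t₂ ≠ t₃ ∧ t₂ ≠ t₄ ∧ t₃ ≠ t₄ ∧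
      (EPoly y₁ y₂).roots
        = {(t₁ : ℂ), (t₁ : ℂ), (t₂ : ℂ), (t₂ : ℂ), (t₃ : ℂ), (t₄ : ℂ)} := by
  have hs₁ : 1 + s ≠ 0 := fun hs₁ => by
    rw [hs₁] at h₂; linarith
  -- neither quadratic degenerates, since `E` has the positive leading coefficient `y₁² + y₂² + 2`
  have hlead : (2 + s)^2 * (2 + 2 * s - s^2) ≠ 0 := by
    rw [← three_mul_sq_mul_leadingCoeff h₁ h₂]; positivity
  obtain ⟨hs₂sq, hm⟩ := mul_ne_zero_iff.mp hlead
  have hs₂ : 2 + s ≠ 0 := (pow_ne_zero_iff two_ne_zero).mp hs₂sq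
  have hq : 0 < 1 + s + s^2 := by nlinarith [sq_nonneg (2 * s + 1)]
  obtain ⟨r₁, r₂, h₁₂, hD⟩ := exists_ne_forall_quadratic_eq (a := 2 + s) (b := 2 + 4 * s)
    (c := -(1 - s)) hs₂
    (by rw [show discrim _ _ _ = 12 * (1 + s + s^2) by unfold discrim; ring]; positivity)
  obtain ⟨r₃, r₄, h₃₄, hM⟩ := exists_ne_forall_quadratic_eq (a := 2 + 2 * s - s^2)
    (b := 2 - 4 * s - 4 * s^2) (c := -(1 + 4 * s + s^2)) hm
    (by rw [show discrim _ _ _ = 12 * (1 + s + s^2)^2 by unfold discrim; ring]; positivity)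
  push_cast at hD hM
  have hD' (x : ℂ) : foldQuadratic (s : ℂ) x = (2 + s) * (x - r₁) * (x - r₂) := by
    rw [foldQuadratic]; linear_combination hD x
  have hM' (x : ℂ) : simpleQuadratic (s : ℂ) x = (2 + 2 * s - s^2) * (x - r₃) * (x - r₄) := by
    rw [simpleQuadratic]; linear_combination hM x
  have hsep {r r' : ℝ} (hr : foldQuadratic (s : ℂ) r = 0)
      (hr' : simpleQuadratic (s : ℂ) r' = 0) : r ≠ r' := fun e =>
    ne_of_foldQuadratic_of_simpleQuadratic (by exact_mod_cast hs) (by exact_mod_cast hs₁)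
      (by exact_mod_cast hs₂) hr hr' (congrArg _ e)
  refine ⟨r₁, r₂, r₃, r₄, h₁₂, hsep (by simp [hD']) (by simp [hM']),
    hsep (by simp [hD']) (by simp [hM']), hsep (by simp [hD']) (by simp [hM']),
    hsep (by simp [hD']) (by simp [hM']), h₃₄, roots_EPoly_eq h₁ h₂ hs₁ hD' hM'⟩

/-- on the interior caustic 𝖢₂ (the curve minus the cuspidal
point), `E` has exactly four distinct complex roots, all real: two double roots
and two simple roots. -/
theorem stmt_15 (y₁ y₂ : ℝ) (hy₁ : 0 < y₁) (hy₂ : 0 < y₂)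
    (h : 27 * y₁^4 * y₂^4 - 18 * y₁^2 * y₂^2 + 4 * y₁^2 + 4 * y₂^2 = 1)
    (hne : ((y₁, y₂) : ℝ × ℝ) ≠ (1 / Real.sqrt 3, 1 / Real.sqrt 3)) :
    ∃ t₁ t₂ t₃ t₄ : ℝ,
      t₁ ≠ t₂ ∧ t₁ ≠ t₃ ∧ t₁ ≠ t₄ ∧ t₂ ≠ t₃ ∧ t₂ ≠ t₄ ∧ t₃ ≠ t₄ ∧
      (EPoly y₁ y₂).roots
        = {(t₁ : ℂ), (t₁ : ℂ), (t₂ : ℂ), (t₂ : ℂ), (t₃ : ℂ), (t₄ : ℂ)} := by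
  have hsq : ∀ y : ℝ, 0 < y → y^2 = 1 / 3 → y = 1 / √3 := fun y hy e => by
    rw [← Real.sqrt_sq hy.le, e, one_div, Real.sqrt_inv, one_div]
  have hy : ((y₁^2, y₂^2) : ℝ × ℝ) ≠ (1 / 3, 1 / 3) := by
    intro e
    simp only [Prod.mk.injEq] at e
    exact hne (by rw [hsq _ hy₁ e.1, hsq _ hy₂ e.2])
  obtain ⟨s, hs, h₁, h₂⟩ := exists_param_of_caustic (by linear_combination h) hy
  exact exists_roots_EPoly_of_param hs h₁ h₂
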